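/- (Proposition, Section 4.2: BIBO stabilization of neutral systems with time-varying delays.) Let M_inf^K ≥ 0 be such that ‖𝒦∗φ‖_∞ ≤ M_inf^K·‖φ‖_∞ for every bounded φ vanishing on (−∞,0]. Let M_inf^cl ≥ 0 be such that for every bounded w : ℝ → ℂ^n and every neutral closed-loop auxiliary solution z with input w for which z and ż are bounded, one has both ‖z‖_∞ ≤ M_inf^cl·‖w‖_∞ and ‖ż‖_∞ ≤ M_inf^cl·‖w‖_∞; let M_inf^clnom, M_inf^clnomd ≥ 0 be analogous gains for neutral closed-loop nominal solutions v with reference r. Assume M_inf^cl·( Σ_{j=1}^J μ_j‖A_j‖ + Σ_{k=1}^K ν_k‖B_k‖·M_inf^K + 2·Σ_{ℓ=1}^L ‖A_{−ℓ}‖ + ε·‖h‖_∞ ) < 1. Then there exists C ≥ 0, depending only on the data, such that for every bounded reference r vanishing on (−∞,0], every neutral closed-loop nominal solution v satisfying the above gain bounds, and every neutral closed-loop time-varying solution x with x and ẋ bounded, one has ‖x‖_∞ ≤ C·‖r‖_∞. -/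

import Mathlib

/-!
Small gain. Read the time-varying equation as the nominal (auxiliary) equation driven by an input
`w` that collects the reference terms and the delay mismatches, and put
`M = max ‖x‖_∞ ‖ẋ‖_∞`. By the mean value theorem a pointwise delay error of at most `μ_j` costs
`μ_j ‖A_j‖ M`; the controller output has derivative `𝒦∗ẋ`, of size at most `M_K M`, so the errors
`ν_k` cost `ν_k ‖B_k‖ M_K M`; the distributed delay is off by an interval of length at most `ε`; and
since nothing is known about `ẋ(t - γ_ℓ(t)) - ẋ(t - H_ℓ)` beyond `2M`, each neutral term costs
`2 ‖A_{-ℓ}‖ M`. Hence `‖w‖_∞ ≤ β M + c ‖r‖_∞`, where `β` is the bracket of the smallness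
condition and `c = ‖B‖ + Σ_k ‖B_k‖`; the auxiliary gain gives
`M ≤ M_cl (β M + c ‖r‖_∞)`, and `M_cl β < 1` yields `‖x‖_∞ ≤ M ≤ M_cl c / (1 - M_cl β) ‖r‖_∞`.
-/

open MeasureTheory

/-- The supremum norm over `t > 0`. -/
noncomputable def supNorm {E : Type*} [NormedAddCommGroup E] (f : ℝ → E) : ℝ :=
  ⨆ t : Set.Ioi (0 : ℝ), ‖f (t : ℝ)‖

/-- A function `ℝ → E` is bounded. -/
def IsBddFun {E : Type*} [NormedAddCommGroup E] (f : ℝ → E) : Prop :=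
  ∃ C, ∀ t, ‖f t‖ ≤ C

/-- Convolution of the controller kernel `𝒦` (a matrix-valued measure, given by
a density `k` with respect to a positive measure `μK`) with a signal `φ`:
`(𝒦∗φ)(t) = ∫ d𝒦(θ) φ(t−θ)`. -/
noncomputable def Kconv {n p : ℕ} (μK : Measure ℝ)
    (k : ℝ → EuclideanSpace ℂ (Fin n) →L[ℂ] EuclideanSpace ℂ (Fin p))
    (φ : ℝ → EuclideanSpace ℂ (Fin n)) (t : ℝ) : EuclideanSpace ℂ (Fin p) :=
  ∫ θ, (k θ) (φ (t - θ)) ∂μK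

open Set

section SupNorm

variable {E : Type*} [NormedAddCommGroup E] {f g : ℝ → E}

lemma IsBddFun.norm_le_supNorm_of_pos (hf : IsBddFun f) {t : ℝ} (ht : 0 < t) :
    ‖f t‖ ≤ supNorm f := by
  obtain ⟨C, hC⟩ := hf
  exact le_ciSup (f := fun s : Ioi (0 : ℝ) => ‖f s‖) ⟨C, by rintro _ ⟨s, rfl⟩; exact hC s⟩ ⟨t, ht⟩

lemma IsBddFun.norm_le_supNorm (hf : IsBddFun f) (hf0 : ∀ t ≤ (0 : ℝ), f t = 0) (t : ℝ) :
    ‖f t‖ ≤ supNorm f := by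
  rcases le_or_gt t 0 with ht | ht
  · rw [hf0 t ht, norm_zero]
    exact (norm_nonneg _).trans (hf.norm_le_supNorm_of_pos one_pos)
  · exact hf.norm_le_supNorm_of_pos ht

lemma supNorm_le {C : ℝ} (h : ∀ t > (0 : ℝ), ‖f t‖ ≤ C) : supNorm f ≤ C :=
  have : Nonempty (Ioi (0 : ℝ)) := ⟨⟨1, mem_Ioi.2 one_pos⟩⟩
  ciSup_le fun t => h t t.2

lemma IsBddFun.add (hf : IsBddFun f) (hg : IsBddFun g) : IsBddFun fun t => f t + g t := by
  obtain ⟨C, hC⟩ := hf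
  obtain ⟨C', hC'⟩ := hg
  exact ⟨C + C', fun t => (norm_add_le _ _).trans (add_le_add (hC t) (hC' t))⟩

lemma IsBddFun.sub (hf : IsBddFun f) (hg : IsBddFun g) : IsBddFun fun t => f t - g t := by
  obtain ⟨C, hC⟩ := hf
  obtain ⟨C', hC'⟩ := hg
  exact ⟨C + C', fun t => (norm_sub_le _ _).trans (add_le_add (hC t) (hC' t))⟩

lemma IsBddFun.sum {ι : Type*} [Fintype ι] {F : ι → ℝ → E} (hF : ∀ i, IsBddFun (F i)) :
    IsBddFun fun t => ∑ i, F i t := by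
  choose C hC using hF
  exact ⟨∑ i, C i, fun t => (norm_sum_le _ _).trans (Finset.sum_le_sum fun i _ => hC i t)⟩

lemma IsBddFun.comp_sub_const (hf : IsBddFun f) (c : ℝ) : IsBddFun fun t => f (t - c) := by
  obtain ⟨C, hC⟩ := hf
  exact ⟨C, fun t => hC _⟩

lemma IsBddFun.clm_comp {𝕜 F : Type*} [NontriviallyNormedField 𝕜] [NormedSpace 𝕜 E]
    [NormedAddCommGroup F] [NormedSpace 𝕜 F] (L : E →L[𝕜] F) (hf : IsBddFun f) :
    IsBddFun fun t => L (f t) := by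
  obtain ⟨C, hC⟩ := hf
  exact ⟨‖L‖ * C, fun t => L.le_opNorm_of_le (hC t)⟩

lemma IsBddFun.intervalIntegral_smul [NormedSpace ℝ E] [NormedSpace ℂ E] {h : ℝ → ℂ} {a b : ℝ}
    (hh : ContinuousOn h (uIcc a b)) (hf : IsBddFun f) :
    IsBddFun fun t => ∫ θ in a..b, h θ • f (t - θ) := by
  obtain ⟨C, hC⟩ := hf
  obtain ⟨Ch, hCh⟩ := isCompact_uIcc.exists_bound_of_continuousOn hh
  refine ⟨Ch * C * |b - a|, fun t => intervalIntegral.norm_integral_le_of_norm_le_const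
    fun θ hθ => ?_⟩
  have hθ' := hCh θ (uIoc_subset_uIcc hθ)
  rw [norm_smul]
  exact mul_le_mul hθ' (hC _) (norm_nonneg _) ((norm_nonneg _).trans hθ')

end SupNorm

section Calculus

variable {E : Type*} [NormedAddCommGroup E] [NormedSpace ℝ E] {x x' : ℝ → E}

lemma eq_zero_of_hasDerivAt_of_eq_zero (hx : ∀ t, HasDerivAt x (x' t) t)
    (hx0 : ∀ t ≤ (0 : ℝ), x t = 0) {t : ℝ} (ht : t ≤ 0) : x' t = 0 := by
  have hu : UniqueDiffWithinAt ℝ (Iic (0 : ℝ)) t := uniqueDiffOn_Iic 0 t ht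
  have hzero : HasDerivWithinAt x 0 (Iic 0) t :=
    (hasDerivWithinAt_const t _ (0 : E)).congr hx0 (hx0 t ht)
  rw [← (hx t).hasDerivWithinAt.derivWithin hu, hzero.derivWithin hu]

lemma stronglyMeasurable_of_hasDerivAt [CompleteSpace E] (hx : ∀ t, HasDerivAt x (x' t) t) :
    StronglyMeasurable x' := by
  rw [show x' = deriv x from funext fun t => (hx t).deriv.symm]
  exact stronglyMeasurable_deriv x

lemma norm_sub_le_of_hasDerivAt (hx : ∀ t, HasDerivAt x (x' t) t) {C : ℝ}
    (hC : ∀ t, ‖x' t‖ ≤ C) {a b d : ℝ} (hab : |a - b| ≤ d) : ‖x a - x b‖ ≤ C * d := by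
  have hmvt := convex_univ.norm_image_sub_le_of_norm_hasDerivWithin_le
    (fun t _ => (hx t).hasDerivWithinAt) (fun t _ => hC t) (mem_univ b) (mem_univ a)
  rw [Real.norm_eq_abs] at hmvt
  exact hmvt.trans (mul_le_mul_of_nonneg_left hab ((norm_nonneg _).trans (hC 0)))

lemma norm_intervalIntegral_sub_le [CompleteSpace E] {g : ℝ → E} {a b c d C : ℝ}
    (hg : ContinuousOn g (Icc a b)) (hc : c ∈ Icc a b) (hd : d ∈ Icc a b)
    (hC : ∀ θ ∈ Icc a b, ‖g θ‖ ≤ C) :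
    ‖(∫ θ in a..c, g θ) - ∫ θ in a..d, g θ‖ ≤ C * |c - d| := by
  have ha : a ∈ Icc a b := ⟨le_rfl, hc.1.trans hc.2⟩
  rw [intervalIntegral.integral_interval_sub_left
    ((hg.mono (uIcc_subset_Icc ha hc)).intervalIntegrable)
    ((hg.mono (uIcc_subset_Icc ha hd)).intervalIntegrable)]
  exact intervalIntegral.norm_integral_le_of_norm_le_const
    fun θ hθ => hC θ (uIcc_subset_Icc hd hc (uIoc_subset_uIcc hθ))

end Calculus

lemma norm_le_iSup_of_isCompact {F : Type*} [NormedAddCommGroup F] {h : ℝ → F} {s : Set ℝ}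
    (hs : IsCompact s) (hh : ContinuousOn h s) {θ : ℝ} (hθ : θ ∈ s) :
    ‖h θ‖ ≤ ⨆ θ : s, ‖h θ‖ := by
  refine le_ciSup (f := fun θ : s => ‖h θ‖) ?_ ⟨θ, hθ⟩
  simpa [image_eq_range] using hs.bddAbove_image hh.norm

lemma norm_sum_clm_apply_le {ι 𝕜 E F : Type*} [Fintype ι] [NontriviallyNormedField 𝕜]
    [NormedAddCommGroup E] [NormedSpace 𝕜 E] [NormedAddCommGroup F] [NormedSpace 𝕜 F]
    (L : ι → E →L[𝕜] F) {a : ι → E} {c : ι → ℝ} (h : ∀ i, ‖a i‖ ≤ c i) :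
    ‖∑ i, L i (a i)‖ ≤ ∑ i, ‖L i‖ * c i :=
  (norm_sum_le _ _).trans (Finset.sum_le_sum fun i _ => (L i).le_opNorm_of_le (h i))

lemma le_mul_div_of_le_mul_add {M a b c R : ℝ} (hM : M ≤ a * (b * M + c * R)) (hab : a * b < 1) :
    M ≤ a * c / (1 - a * b) * R := by
  rw [div_mul_eq_mul_div, le_div_iff₀ (sub_pos.2 hab)]
  linarith

section Kconv

variable {n p : ℕ} {μK : Measure ℝ}
  {k : ℝ → EuclideanSpace ℂ (Fin n) →L[ℂ] EuclideanSpace ℂ (Fin p)} {Ck : ℝ}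

lemma aestronglyMeasurable_Kconv_integrand (hkmeas : StronglyMeasurable k)
    {φ : ℝ → EuclideanSpace ℂ (Fin n)} (hφ : StronglyMeasurable φ) (t : ℝ) :
    AEStronglyMeasurable (fun θ => k θ (φ (t - θ))) μK :=
  (isBoundedBilinearMap_apply.continuous.comp_stronglyMeasurable
    (hkmeas.prodMk (hφ.comp_measurable (measurable_const.sub measurable_id)))).aestronglyMeasurable

lemma norm_Kconv_integrand_le (hk : ∀ θ, ‖k θ‖ ≤ Ck) {φ : ℝ → EuclideanSpace ℂ (Fin n)}
    {C : ℝ} (hφ : ∀ s, ‖φ s‖ ≤ C) (t θ : ℝ) : ‖k θ (φ (t - θ))‖ ≤ Ck * C :=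
  (k θ).le_of_opNorm_le (hk θ) _ |>.trans
    (mul_le_mul_of_nonneg_left (hφ _) ((norm_nonneg _).trans (hk θ)))

lemma Kconv_eq_zero_of_nonpos (hμK : μK (Iio 0) = 0) {φ : ℝ → EuclideanSpace ℂ (Fin n)}
    (hφ0 : ∀ s ≤ (0 : ℝ), φ s = 0) {t : ℝ} (ht : t ≤ 0) : Kconv μK k φ t = 0 := by
  refine integral_eq_zero_of_ae ?_
  filter_upwards [measure_eq_zero_iff_ae_notMem.1 hμK] with θ hθ
  rw [mem_Iio, not_lt] at hθ
  rw [hφ0 (t - θ) (by linarith), map_zero, Pi.zero_apply]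

variable [IsFiniteMeasure μK]

lemma isBddFun_Kconv (hk : ∀ θ, ‖k θ‖ ≤ Ck)
    {φ : ℝ → EuclideanSpace ℂ (Fin n)} (hφ : IsBddFun φ) : IsBddFun (Kconv μK k φ) := by
  obtain ⟨C, hC⟩ := hφ
  exact ⟨Ck * C * μK.real univ, fun t =>
    norm_integral_le_of_norm_le_const (ae_of_all _ (norm_Kconv_integrand_le hk hC t))⟩

lemma hasDerivAt_Kconv (hkmeas : StronglyMeasurable k) (hk : ∀ θ, ‖k θ‖ ≤ Ck)
    {x x' : ℝ → EuclideanSpace ℂ (Fin n)} (hx : ∀ t, HasDerivAt x (x' t) t)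
    (hxb : IsBddFun x) (hx'b : IsBddFun x') (t : ℝ) :
    HasDerivAt (Kconv μK k x) (Kconv μK k x' t) t := by
  obtain ⟨C, hC⟩ := hxb
  obtain ⟨C', hC'⟩ := hx'b
  have hxm : StronglyMeasurable x :=
    (continuous_iff_continuousAt.2 fun s => (hx s).continuousAt).stronglyMeasurable
  have hshift (θ s : ℝ) : HasDerivAt (fun u => x (u - θ)) (x' (s - θ)) s := by
    simpa using (hx (s - θ)).comp_sub_const s θ
  refine (hasDerivAt_integral_of_dominated_loc_of_deriv_le (bound := fun _ => Ck * C')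
    (Metric.ball_mem_nhds t one_pos)
    (.of_forall fun s => aestronglyMeasurable_Kconv_integrand hkmeas hxm s)
    ((integrable_const (Ck * C)).mono' (aestronglyMeasurable_Kconv_integrand hkmeas hxm t)
      (ae_of_all _ (norm_Kconv_integrand_le hk hC t)))
    (aestronglyMeasurable_Kconv_integrand hkmeas (stronglyMeasurable_of_hasDerivAt hx) t)
    (ae_of_all _ fun θ s _ => norm_Kconv_integrand_le hk hC' s θ) (integrable_const _)
    (ae_of_all _ fun θ s _ =>
      ((k θ).restrictScalars ℝ).hasFDerivAt.comp_hasDerivAt s (hshift θ s))).2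

end Kconv

section ClosedLoop

variable {n p J K L : ℕ}
  (A : EuclideanSpace ℂ (Fin n) →L[ℂ] EuclideanSpace ℂ (Fin n))
  (Aj : Fin J → EuclideanSpace ℂ (Fin n) →L[ℂ] EuclideanSpace ℂ (Fin n))
  (Am : Fin L → EuclideanSpace ℂ (Fin n) →L[ℂ] EuclideanSpace ℂ (Fin n))
  (B : EuclideanSpace ℂ (Fin p) →L[ℂ] EuclideanSpace ℂ (Fin n))
  (Bk : Fin K → EuclideanSpace ℂ (Fin p) →L[ℂ] EuclideanSpace ℂ (Fin n))
  (hd : Fin J → ℝ) (T : Fin K → ℝ) (Hl : Fin L → ℝ) (D : ℝ) (h : ℝ → ℂ) (μK : Measure ℝ)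
  (k : ℝ → EuclideanSpace ℂ (Fin n) →L[ℂ] EuclideanSpace ℂ (Fin p))
  (x x' : ℝ → EuclideanSpace ℂ (Fin n))

noncomputable def auxInput (t : ℝ) : EuclideanSpace ℂ (Fin n) :=
  x' t + ∑ ℓ, Am ℓ (x' (t - Hl ℓ))
    - (A (x t) + ∑ j, Aj j (x (t - hd j)) + (∫ θ in (0 : ℝ)..D, h θ • x (t - θ))
      + B (Kconv μK k x t) + ∑ kk, Bk kk (Kconv μK k x (t - T kk)))

lemma auxInput_spec (t : ℝ) :
    x' t + ∑ ℓ, Am ℓ (x' (t - Hl ℓ))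
      = A (x t) + ∑ j, Aj j (x (t - hd j)) + (∫ θ in (0 : ℝ)..D, h θ • x (t - θ))
        + B (Kconv μK k x t) + ∑ kk, Bk kk (Kconv μK k x (t - T kk))
        + auxInput A Aj Am B Bk hd T Hl D h μK k x x' t :=
  (add_sub_cancel _ _).symm

lemma isBddFun_auxInput [IsFiniteMeasure μK] {Ck : ℝ} (hk : ∀ θ, ‖k θ‖ ≤ Ck)
    (hh : ContinuousOn h (uIcc 0 D)) (hxb : IsBddFun x) (hx'b : IsBddFun x') :
    IsBddFun (auxInput A Aj Am B Bk hd T Hl D h μK k x x') :=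
  have hKx := isBddFun_Kconv (μK := μK) hk hxb
  (hx'b.add (.sum fun ℓ => (hx'b.comp_sub_const _).clm_comp (Am ℓ))).sub
    (((((hxb.clm_comp A).add (.sum fun j => (hxb.comp_sub_const _).clm_comp (Aj j))).add
      (hxb.intervalIntegral_smul hh)).add (hKx.clm_comp B)).add
      (.sum fun kk => (hKx.comp_sub_const _).clm_comp (Bk kk)))

variable {A Aj Am B Bk hd T Hl D h μK k x x'}

lemma auxInput_eq_of_timeVarying {r : ℝ → EuclideanSpace ℂ (Fin p)} {τ : Fin J → ℝ → ℝ}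
    {σ : Fin K → ℝ → ℝ} {γ : Fin L → ℝ → ℝ} {δ : ℝ → ℝ} {t : ℝ}
    (heq : x' t + ∑ ℓ, Am ℓ (x' (t - γ ℓ t))
      = A (x t) + ∑ j, Aj j (x (t - τ j t)) + (∫ θ in (0 : ℝ)..(δ t), h θ • x (t - θ))
        + B (Kconv μK k x t) + ∑ kk, Bk kk (Kconv μK k x (t - σ kk t))
        + B (r t) + ∑ kk, Bk kk (r (t - σ kk t))) :
    auxInput A Aj Am B Bk hd T Hl D h μK k x x' t
      = ∑ ℓ, Am ℓ (x' (t - Hl ℓ) - x' (t - γ ℓ t))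
        + ∑ j, Aj j (x (t - τ j t) - x (t - hd j))
        + ((∫ θ in (0 : ℝ)..(δ t), h θ • x (t - θ)) - ∫ θ in (0 : ℝ)..D, h θ • x (t - θ))
        + ∑ kk, Bk kk (Kconv μK k x (t - σ kk t) - Kconv μK k x (t - T kk))
        + (B (r t) + ∑ kk, Bk kk (r (t - σ kk t))) := by
  rw [auxInput, eq_sub_of_add_eq heq]
  simp only [map_sub, Finset.sum_sub_distrib]
  abel

lemma norm_auxInput_le {r : ℝ → EuclideanSpace ℂ (Fin p)} {τ : Fin J → ℝ → ℝ}
    {σ : Fin K → ℝ → ℝ} {γ : Fin L → ℝ → ℝ} {δ : ℝ → ℝ} {μ : Fin J → ℝ} {ν : Fin K → ℝ}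
    {ε hNorm MK M R t : ℝ} (hε0 : 0 ≤ ε) (hεD : ε ≤ D) (hh : ContinuousOn h (Icc 0 (D + ε)))
    (hhNorm : ∀ θ ∈ Icc 0 (D + ε), ‖h θ‖ ≤ hNorm)
    (hτb : ∀ j, hd j - μ j ≤ τ j t ∧ τ j t ≤ hd j + μ j)
    (hσb : ∀ kk, T kk - ν kk ≤ σ kk t ∧ σ kk t ≤ T kk + ν kk)
    (hδb : D - ε ≤ δ t ∧ δ t ≤ D + ε)
    (hx : ∀ s, HasDerivAt x (x' s) s) (hxM : ∀ s, ‖x s‖ ≤ M) (hx'M : ∀ s, ‖x' s‖ ≤ M)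
    (hKx : ∀ s, HasDerivAt (Kconv μK k x) (Kconv μK k x' s) s)
    (hKx'M : ∀ s, ‖Kconv μK k x' s‖ ≤ MK * M) (hr : ∀ s, ‖r s‖ ≤ R)
    (heq : x' t + ∑ ℓ, Am ℓ (x' (t - γ ℓ t))
      = A (x t) + ∑ j, Aj j (x (t - τ j t)) + (∫ θ in (0 : ℝ)..(δ t), h θ • x (t - θ))
        + B (Kconv μK k x t) + ∑ kk, Bk kk (Kconv μK k x (t - σ kk t))
        + B (r t) + ∑ kk, Bk kk (r (t - σ kk t))) :
    ‖auxInput A Aj Am B Bk hd T Hl D h μK k x x' t‖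
      ≤ ((∑ j, μ j * ‖Aj j‖) + (∑ kk, ν kk * ‖Bk kk‖) * MK + 2 * (∑ ℓ, ‖Am ℓ‖) + ε * hNorm) * M
        + (‖B‖ + ∑ kk, ‖Bk kk‖) * R := by
  have hM0 : 0 ≤ M := (norm_nonneg _).trans (hxM 0)
  have hNorm0 : 0 ≤ hNorm := (norm_nonneg _).trans (hhNorm 0 ⟨le_rfl, by linarith⟩)
  have hneutral : ‖∑ ℓ, Am ℓ (x' (t - Hl ℓ) - x' (t - γ ℓ t))‖ ≤ 2 * (∑ ℓ, ‖Am ℓ‖) * M :=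
    (norm_sum_clm_apply_le Am fun ℓ => norm_sub_le_of_le (hx'M _) (hx'M _)).trans_eq
      (by rw [← Finset.sum_mul]; ring)
  have hpointwise : ‖∑ j, Aj j (x (t - τ j t) - x (t - hd j))‖ ≤ (∑ j, μ j * ‖Aj j‖) * M :=
    (norm_sum_clm_apply_le Aj (c := fun j => M * μ j) fun j => norm_sub_le_of_hasDerivAt hx hx'M
      (abs_le.2 ⟨by linarith [hτb j], by linarith [hτb j]⟩)).trans_eq
      (by rw [Finset.sum_mul]; exact Finset.sum_congr rfl fun j _ => by ring)
  have hdistributed :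
      ‖(∫ θ in (0 : ℝ)..(δ t), h θ • x (t - θ)) - ∫ θ in (0 : ℝ)..D, h θ • x (t - θ)‖
        ≤ ε * hNorm * M := by
    have hxc : Continuous x := continuous_iff_continuousAt.2 fun s => (hx s).continuousAt
    refine (norm_intervalIntegral_sub_le (g := fun θ => h θ • x (t - θ)) (C := hNorm * M)
      (hh.smul (hxc.comp (continuous_sub_left t)).continuousOn)
      ⟨by linarith, hδb.2⟩ ⟨by linarith, by linarith⟩ fun θ hθ => ?_).trans ?_
    · rw [norm_smul]
      exact mul_le_mul (hhNorm θ hθ) (hxM _) (norm_nonneg _) hNorm0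
    · have hδD : |δ t - D| ≤ ε := abs_le.2 ⟨by linarith, by linarith⟩
      exact (mul_le_mul_of_nonneg_left hδD (mul_nonneg hNorm0 hM0)).trans_eq (by ring)
  have hcontrol : ‖∑ kk, Bk kk (Kconv μK k x (t - σ kk t) - Kconv μK k x (t - T kk))‖
      ≤ (∑ kk, ν kk * ‖Bk kk‖) * MK * M :=
    (norm_sum_clm_apply_le Bk (c := fun kk => MK * M * ν kk) fun kk =>
      norm_sub_le_of_hasDerivAt hKx hKx'M
        (abs_le.2 ⟨by linarith [hσb kk], by linarith [hσb kk]⟩)).trans_eq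
      (by rw [Finset.sum_mul, Finset.sum_mul]; exact Finset.sum_congr rfl fun kk _ => by ring)
  have hreference : ‖B (r t) + ∑ kk, Bk kk (r (t - σ kk t))‖ ≤ (‖B‖ + ∑ kk, ‖Bk kk‖) * R := by
    have hBk := norm_sum_clm_apply_le Bk fun kk => hr (t - σ kk t)
    rw [← Finset.sum_mul] at hBk
    linarith [norm_add_le (B (r t)) (∑ kk, Bk kk (r (t - σ kk t))), B.le_opNorm_of_le (hr t)]
  rw [auxInput_eq_of_timeVarying heq]
  refine (norm_add_le _ _).trans ((add_le_add norm_add₄_le le_rfl).trans ?_)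
  linarith

end ClosedLoop

theorem stmt_6_general (n p J K L : ℕ)
    (A : EuclideanSpace ℂ (Fin n) →L[ℂ] EuclideanSpace ℂ (Fin n))
    (Aj : Fin J → EuclideanSpace ℂ (Fin n) →L[ℂ] EuclideanSpace ℂ (Fin n))
    (Am : Fin L → EuclideanSpace ℂ (Fin n) →L[ℂ] EuclideanSpace ℂ (Fin n))
    (B : EuclideanSpace ℂ (Fin p) →L[ℂ] EuclideanSpace ℂ (Fin n))
    (Bk : Fin K → EuclideanSpace ℂ (Fin p) →L[ℂ] EuclideanSpace ℂ (Fin n))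
    (D ε : ℝ) (hε0 : 0 ≤ ε) (hεD : ε ≤ D)
    (hd μ : Fin J → ℝ) (T ν : Fin K → ℝ) (Hl : Fin L → ℝ)
    (h : ℝ → ℂ) (hcont : ContinuousOn h (Set.Icc 0 (D + ε)))
    (hNorm : ℝ) (hhNorm : hNorm = ⨆ θ : Set.Icc (0 : ℝ) (D + ε), ‖h (θ : ℝ)‖)
    (τ : Fin J → ℝ → ℝ) (hτb : ∀ j t, hd j - μ j ≤ τ j t ∧ τ j t ≤ hd j + μ j)
    (σ : Fin K → ℝ → ℝ) (hσb : ∀ k t, T k - ν k ≤ σ k t ∧ σ k t ≤ T k + ν k)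
    (γ : Fin L → ℝ → ℝ) (δ : ℝ → ℝ) (hδb : ∀ t, D - ε ≤ δ t ∧ δ t ≤ D + ε)
    -- the controller: a finite kernel measure supported on `[0,∞)`
    (μK : Measure ℝ) [IsFiniteMeasure μK] (hμKsupp : μK (Set.Iio 0) = 0)
    (k : ℝ → EuclideanSpace ℂ (Fin n) →L[ℂ] EuclideanSpace ℂ (Fin p))
    (hkmeas : StronglyMeasurable k) (hkbdd : ∃ Ck, ∀ θ, ‖k θ‖ ≤ Ck)
    (MK Mcl Mclnom Mclnomd : ℝ)
    (hMK0 : 0 ≤ MK) (hMcl0 : 0 ≤ Mcl)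
    -- the `L∞` gain of the controller
    (hKgain : ∀ φ : ℝ → EuclideanSpace ℂ (Fin n),
      IsBddFun φ → (∀ t ≤ (0 : ℝ), φ t = 0) →
      supNorm (Kconv μK k φ) ≤ MK * supNorm φ)
    -- gains of the neutral closed-loop auxiliary system
    (haux : ∀ w z z' : ℝ → EuclideanSpace ℂ (Fin n),
      IsBddFun w →
      (∀ t, HasDerivAt z (z' t) t) → (∀ t ≤ (0 : ℝ), z t = 0) →
      (∀ t > (0 : ℝ), z' t + ∑ ℓ : Fin L, Am ℓ (z' (t - Hl ℓ))
        = A (z t) + ∑ j : Fin J, Aj j (z (t - hd j))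
          + (∫ θ in (0 : ℝ)..D, h θ • z (t - θ))
          + B (Kconv μK k z t) + ∑ kk : Fin K, Bk kk (Kconv μK k z (t - T kk))
          + w t) →
      IsBddFun z → IsBddFun z' →
      supNorm z ≤ Mcl * supNorm w ∧ supNorm z' ≤ Mcl * supNorm w)
    -- the smallness condition
    (hsmall : Mcl * ((∑ j : Fin J, μ j * ‖Aj j‖)
      + (∑ kk : Fin K, ν kk * ‖Bk kk‖) * MK
      + 2 * (∑ ℓ : Fin L, ‖Am ℓ‖) + ε * hNorm) < 1) :
    ∃ C : ℝ, 0 ≤ C ∧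
      ∀ r : ℝ → EuclideanSpace ℂ (Fin p), IsBddFun r → (∀ t ≤ (0 : ℝ), r t = 0) →
      ∀ v v' : ℝ → EuclideanSpace ℂ (Fin n),
        (∀ t, HasDerivAt v (v' t) t) → (∀ t ≤ (0 : ℝ), v t = 0) →
        -- `v` is the neutral closed-loop nominal solution for the reference `r`
        (∀ t > (0 : ℝ), v' t + ∑ ℓ : Fin L, Am ℓ (v' (t - Hl ℓ))
          = A (v t) + ∑ j : Fin J, Aj j (v (t - hd j))
            + (∫ θ in (0 : ℝ)..D, h θ • v (t - θ))
            + B (Kconv μK k v t) + ∑ kk : Fin K, Bk kk (Kconv μK k v (t - T kk))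
            + B (r t) + ∑ kk : Fin K, Bk kk (r (t - T kk))) →
        supNorm v ≤ Mclnom * supNorm r → supNorm v' ≤ Mclnomd * supNorm r →
      ∀ x x' : ℝ → EuclideanSpace ℂ (Fin n),
        (∀ t, HasDerivAt x (x' t) t) → (∀ t ≤ (0 : ℝ), x t = 0) →
        -- `x` is the neutral closed-loop time-varying solution for `r`
        (∀ t > (0 : ℝ), x' t + ∑ ℓ : Fin L, Am ℓ (x' (t - γ ℓ t))
          = A (x t) + ∑ j : Fin J, Aj j (x (t - τ j t))
            + (∫ θ in (0 : ℝ)..(δ t), h θ • x (t - θ))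
            + B (Kconv μK k x t)
            + ∑ kk : Fin K, Bk kk (Kconv μK k x (t - σ kk t))
            + B (r t) + ∑ kk : Fin K, Bk kk (r (t - σ kk t))) →
        IsBddFun x → IsBddFun x' →
        supNorm x ≤ C * supNorm r := by
  obtain ⟨Ck, hk⟩ := hkbdd
  have hhb : ∀ θ ∈ Icc 0 (D + ε), ‖h θ‖ ≤ hNorm := fun θ hθ =>
    hhNorm ▸ norm_le_iSup_of_isCompact isCompact_Icc hcont hθ
  have hD : D ∈ Icc 0 (D + ε) := ⟨by linarith, by linarith⟩
  set β := (∑ j, μ j * ‖Aj j‖) + (∑ kk, ν kk * ‖Bk kk‖) * MK + 2 * (∑ ℓ, ‖Am ℓ‖) + ε * hNorm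
  refine ⟨Mcl * (‖B‖ + ∑ kk, ‖Bk kk‖) / (1 - Mcl * β),
    div_nonneg (by positivity) (sub_pos.2 hsmall).le, ?_⟩
  intro r hrb hr0 v v' _ _ _ _ _ x x' hx hx0 heq hxb hx'b
  have hx'0 : ∀ t ≤ (0 : ℝ), x' t = 0 := fun t => eq_zero_of_hasDerivAt_of_eq_zero hx hx0
  set M := max (supNorm x) (supNorm x')
  have hxM (s : ℝ) : ‖x s‖ ≤ M := (hxb.norm_le_supNorm hx0 s).trans (le_max_left _ _)
  have hx'M (s : ℝ) : ‖x' s‖ ≤ M := (hx'b.norm_le_supNorm hx'0 s).trans (le_max_right _ _)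
  have hKx'M (s : ℝ) : ‖Kconv μK k x' s‖ ≤ MK * M :=
    ((isBddFun_Kconv hk hx'b).norm_le_supNorm
      (fun _ => Kconv_eq_zero_of_nonpos hμKsupp hx'0) s).trans
        ((hKgain x' hx'b hx'0).trans (mul_le_mul_of_nonneg_left (le_max_right _ _) hMK0))
  set w := auxInput A Aj Am B Bk hd T Hl D h μK k x x'
  have hw : supNorm w ≤ β * M + (‖B‖ + ∑ kk, ‖Bk kk‖) * supNorm r :=
    supNorm_le fun t ht => norm_auxInput_le hε0 hεD hcont hhb (fun j => hτb j t)
      (fun kk => hσb kk t) (hδb t) hx hxM hx'M (hasDerivAt_Kconv hkmeas hk hx hxb hx'b) hKx'M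
      (hrb.norm_le_supNorm hr0) (heq t ht)
  obtain ⟨hz, hz'⟩ := haux w x x'
    (isBddFun_auxInput A Aj Am B Bk hd T Hl D h μK k x x' hk
      (hcont.mono (uIcc_subset_Icc ⟨le_rfl, hD.1.trans hD.2⟩ hD)) hxb hx'b)
    hx hx0 (fun t _ => auxInput_spec A Aj Am B Bk hd T Hl D h μK k x x' t) hxb hx'b
  have hgain := mul_le_mul_of_nonneg_left hw hMcl0
  exact (le_max_left _ _).trans
    (le_mul_div_of_le_mul_add (max_le (hz.trans hgain) (hz'.trans hgain)) hsmall)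

/-- (Proposition, Section 4.2: BIBO stabilization of neutral systems with
time-varying delays by a stable controller `u = 𝒦∗x + r`.) -/
theorem stmt_6 (n p J K L : ℕ)
    (A : EuclideanSpace ℂ (Fin n) →L[ℂ] EuclideanSpace ℂ (Fin n))
    (Aj : Fin J → EuclideanSpace ℂ (Fin n) →L[ℂ] EuclideanSpace ℂ (Fin n))
    (Am : Fin L → EuclideanSpace ℂ (Fin n) →L[ℂ] EuclideanSpace ℂ (Fin n))
    (B : EuclideanSpace ℂ (Fin p) →L[ℂ] EuclideanSpace ℂ (Fin n))
    (Bk : Fin K → EuclideanSpace ℂ (Fin p) →L[ℂ] EuclideanSpace ℂ (Fin n))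
    -- Hypothesis (H)
    (hH : ∑ ℓ : Fin L, ‖Am ℓ‖ < 1)
    (D ε : ℝ) (hε0 : 0 ≤ ε) (hεD : ε ≤ D)
    (hd μ : Fin J → ℝ) (hμ0 : ∀ j, 0 ≤ μ j) (hμh : ∀ j, μ j ≤ hd j)
    (T ν : Fin K → ℝ) (hν0 : ∀ k, 0 ≤ ν k) (hνT : ∀ k, ν k ≤ T k)
    (Hl η : Fin L → ℝ) (hη0 : ∀ ℓ, 0 ≤ η ℓ) (hηH : ∀ ℓ, η ℓ ≤ Hl ℓ)
    (h : ℝ → ℂ) (hcont : ContinuousOn h (Set.Icc 0 (D + ε)))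
    (hNorm : ℝ) (hhNorm : hNorm = ⨆ θ : Set.Icc (0 : ℝ) (D + ε), ‖h (θ : ℝ)‖)
    (τ : Fin J → ℝ → ℝ) (hτm : ∀ j, Measurable (τ j))
    (hτb : ∀ j t, hd j - μ j ≤ τ j t ∧ τ j t ≤ hd j + μ j)
    (σ : Fin K → ℝ → ℝ) (hσm : ∀ k, Measurable (σ k))
    (hσb : ∀ k t, T k - ν k ≤ σ k t ∧ σ k t ≤ T k + ν k)
    (γ : Fin L → ℝ → ℝ) (hγm : ∀ ℓ, Measurable (γ ℓ))
    (hγb : ∀ ℓ t, Hl ℓ - η ℓ ≤ γ ℓ t ∧ γ ℓ t ≤ Hl ℓ + η ℓ)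
    (δ : ℝ → ℝ) (hδm : Measurable δ) (hδb : ∀ t, D - ε ≤ δ t ∧ δ t ≤ D + ε)
    -- the controller: a finite kernel measure supported on `[0,∞)`
    (μK : Measure ℝ) [IsFiniteMeasure μK] (hμKsupp : μK (Set.Iio 0) = 0)
    (k : ℝ → EuclideanSpace ℂ (Fin n) →L[ℂ] EuclideanSpace ℂ (Fin p))
    (hkmeas : StronglyMeasurable k) (hkbdd : ∃ Ck, ∀ θ, ‖k θ‖ ≤ Ck)
    (MK Mcl Mclnom Mclnomd : ℝ)
    (hMK0 : 0 ≤ MK) (hMcl0 : 0 ≤ Mcl) (hMclnom0 : 0 ≤ Mclnom)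
    (hMclnomd0 : 0 ≤ Mclnomd)
    -- the `L∞` gain of the controller
    (hKgain : ∀ φ : ℝ → EuclideanSpace ℂ (Fin n),
      IsBddFun φ → (∀ t ≤ (0 : ℝ), φ t = 0) →
      supNorm (Kconv μK k φ) ≤ MK * supNorm φ)
    -- gains of the neutral closed-loop auxiliary system
    (haux : ∀ w z z' : ℝ → EuclideanSpace ℂ (Fin n),
      IsBddFun w →
      (∀ t, HasDerivAt z (z' t) t) → (∀ t ≤ (0 : ℝ), z t = 0) →
      (∀ t > (0 : ℝ), z' t + ∑ ℓ : Fin L, Am ℓ (z' (t - Hl ℓ))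
        = A (z t) + ∑ j : Fin J, Aj j (z (t - hd j))
          + (∫ θ in (0 : ℝ)..D, h θ • z (t - θ))
          + B (Kconv μK k z t) + ∑ kk : Fin K, Bk kk (Kconv μK k z (t - T kk))
          + w t) →
      IsBddFun z → IsBddFun z' →
      supNorm z ≤ Mcl * supNorm w ∧ supNorm z' ≤ Mcl * supNorm w)
    -- the smallness condition
    (hsmall : Mcl * ((∑ j : Fin J, μ j * ‖Aj j‖)
      + (∑ kk : Fin K, ν kk * ‖Bk kk‖) * MK
      + 2 * (∑ ℓ : Fin L, ‖Am ℓ‖) + ε * hNorm) < 1) :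
    ∃ C : ℝ, 0 ≤ C ∧
      ∀ r : ℝ → EuclideanSpace ℂ (Fin p), IsBddFun r → (∀ t ≤ (0 : ℝ), r t = 0) →
      ∀ v v' : ℝ → EuclideanSpace ℂ (Fin n),
        (∀ t, HasDerivAt v (v' t) t) → (∀ t ≤ (0 : ℝ), v t = 0) →
        -- `v` is the neutral closed-loop nominal solution for the reference `r`
        (∀ t > (0 : ℝ), v' t + ∑ ℓ : Fin L, Am ℓ (v' (t - Hl ℓ))
          = A (v t) + ∑ j : Fin J, Aj j (v (t - hd j))
            + (∫ θ in (0 : ℝ)..D, h θ • v (t - θ))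
            + B (Kconv μK k v t) + ∑ kk : Fin K, Bk kk (Kconv μK k v (t - T kk))
            + B (r t) + ∑ kk : Fin K, Bk kk (r (t - T kk))) →
        supNorm v ≤ Mclnom * supNorm r → supNorm v' ≤ Mclnomd * supNorm r →
      ∀ x x' : ℝ → EuclideanSpace ℂ (Fin n),
        (∀ t, HasDerivAt x (x' t) t) → (∀ t ≤ (0 : ℝ), x t = 0) →
        -- `x` is the neutral closed-loop time-varying solution for `r`
        (∀ t > (0 : ℝ), x' t + ∑ ℓ : Fin L, Am ℓ (x' (t - γ ℓ t))
          = A (x t) + ∑ j : Fin J, Aj j (x (t - τ j t))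
            + (∫ θ in (0 : ℝ)..(δ t), h θ • x (t - θ))
            + B (Kconv μK k x t)
            + ∑ kk : Fin K, Bk kk (Kconv μK k x (t - σ kk t))
            + B (r t) + ∑ kk : Fin K, Bk kk (r (t - σ kk t))) →
        IsBddFun x → IsBddFun x' →
        supNorm x ≤ C * supNorm r :=
  stmt_6_general n p J K L A Aj Am B Bk D ε hε0 hεD hd μ T ν Hl h hcont hNorm hhNorm τ hτb σ hσb γ δ
    hδb μK hμKsupp k hkmeas hkbdd MK Mcl Mclnom Mclnomd hMK0 hMcl0 hKgain haux hsmall
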